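/- Let p ∈ ℝ² and let Q ⊆ ℝ² \ {p} be a finite nonempty set. For θ ∈ ℝ let W_θ(p) = { p + r·(cos φ, sin φ) : r > 0, φ ∈ [θ, θ + π/2] } be the closed wedge of angular width π/2 with apex p starting at direction θ. Then the set { θ mod 2π : W_θ(p) ∩ Q = ∅ } ⊆ ℝ/2πℤ is a union of at most three arcs. -/

import Mathlib

/-- A subset of the circle of angles `ℝ/2πℤ` is an arc if it is the image of an
interval (an order-connected subset) of `ℝ` under the quotient map. -/
def IsArc (A : Set Real.Angle) : Prop :=
  ∃ I : Set ℝ, I.OrdConnected ∧ A = (fun x : ℝ => (x : Real.Angle)) '' I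

/-- The closed wedge of angular width `π/2` with apex `p` starting at direction `θ`. -/
def wedge (p : ℝ × ℝ) (θ : ℝ) : Set (ℝ × ℝ) :=
  {x | ∃ r > 0, ∃ φ ∈ Set.Icc θ (θ + Real.pi / 2),
    x = (p.1 + r * Real.cos φ, p.2 + r * Real.sin φ)}

open Real Set

/-- The direction angle of `q` as seen from `p`. -/
noncomputable def dang (p q : ℝ × ℝ) : ℝ := Complex.arg ⟨q.1 - p.1, q.2 - p.2⟩

lemma mem_wedge_iff (p q : ℝ × ℝ) (hq : q ≠ p) (θ : ℝ) :
    q ∈ wedge p θ ↔ ∃ k : ℤ, dang p q + 2 * π * k ∈ Set.Icc θ (θ + π / 2) := by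
  set z : ℂ := ⟨q.1 - p.1, q.2 - p.2⟩ with hzdef
  have hz : z ≠ 0 := by
    intro h
    apply hq
    have h1 : z.re = 0 := by rw [h]; rfl
    have h2 : z.im = 0 := by rw [h]; rfl
    have : q.1 = p.1 := by simpa [hzdef, sub_eq_zero] using h1
    have : q.2 = p.2 := by simpa [hzdef, sub_eq_zero] using h2
    exact Prod.ext ‹q.1 = p.1› ‹q.2 = p.2›
  have hre : z.re = q.1 - p.1 := rfl
  have him : z.im = q.2 - p.2 := rfl
  have harg : dang p q = Complex.arg z := rfl
  constructor
  · rintro ⟨r', hr', φ, hφ, heq⟩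
    have h1 : q.1 = p.1 + r' * Real.cos φ := congrArg Prod.fst heq
    have h2 : q.2 = p.2 + r' * Real.sin φ := congrArg Prod.snd heq
    have hre' : z.re = r' * Real.cos φ := by rw [hre, h1]; ring
    have him' : z.im = r' * Real.sin φ := by rw [him, h2]; ring
    have habs : ‖z‖ = r' := by
      rw [Complex.norm_def, Complex.normSq_apply, hre', him']
      have : r' * Real.cos φ * (r' * Real.cos φ) + r' * Real.sin φ * (r' * Real.sin φ)
          = r' ^ 2 := by
        have := Real.sin_sq_add_cos_sq φ
        nlinarith
      rw [this, Real.sqrt_sq hr'.le]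
    have hcos : Real.cos (dang p q) = Real.cos φ := by
      rw [harg, Complex.cos_arg hz, hre', habs, mul_div_cancel_left₀ _ hr'.ne']
    have hsin : Real.sin (dang p q) = Real.sin φ := by
      rw [harg, Complex.sin_arg, him', habs, mul_div_cancel_left₀ _ hr'.ne']
    have hAngle : (φ : Real.Angle) = (dang p q : Real.Angle) :=
      Real.Angle.cos_sin_inj hcos.symm hsin.symm
    obtain ⟨k, hk⟩ := Real.Angle.angle_eq_iff_two_pi_dvd_sub.mp hAngle
    refine ⟨k, ?_, ?_⟩
    · have := hφ.1; linarith [hk]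
    · have := hφ.2; linarith [hk]
  · rintro ⟨k, hk⟩
    have hr : 0 < ‖z‖ := norm_pos_iff.mpr hz
    refine ⟨‖z‖, hr, dang p q + 2 * π * k, hk, ?_⟩
    have e1 : dang p q + 2 * π * (k : ℝ) = dang p q + (k : ℝ) * (2 * π) := by ring
    have hcos : Real.cos (dang p q + 2 * π * k) = Real.cos (dang p q) := by
      rw [e1, Real.cos_add_int_mul_two_pi]
    have hsin : Real.sin (dang p q + 2 * π * k) = Real.sin (dang p q) := by
      rw [e1, Real.sin_add_int_mul_two_pi]
    have hc : ‖z‖ * Real.cos (dang p q) = q.1 - p.1 := by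
      rw [harg, Complex.cos_arg hz, mul_div_cancel₀ _ hr.ne', hre]
    have hs : ‖z‖ * Real.sin (dang p q) = q.2 - p.2 := by
      rw [harg, Complex.sin_arg, mul_div_cancel₀ _ hr.ne', him]
    have : q = (q.1, q.2) := rfl
    rw [this]
    refine Prod.ext ?_ ?_
    · simp only [hcos]; rw [hc]; ring
    · simp only [hsin]; rw [hs]; ring

/-- The key combinatorial lemma: given a closed, locally finite, `2π`-periodic set `D` of
"danger directions" containing `b`, the set of `θ` in the fundamental window `[b, b+2π)`
such that `[θ, θ+π/2]` avoids `D` is a union of at most three order-connected sets. -/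
lemma aux_three_intervals (D : Set ℝ) (b : ℝ) (hb : b ∈ D)
    (hDfin : ∀ a c : ℝ, (D ∩ Icc a c).Finite)
    (hDper : ∀ x ∈ D, x + 2 * π ∈ D) :
    ∃ I₁ I₂ I₃ : Set ℝ, I₁.OrdConnected ∧ I₂.OrdConnected ∧ I₃.OrdConnected ∧
      {θ | (∀ x ∈ D, x ∉ Icc θ (θ + π / 2)) ∧ θ ∈ Ico b (b + 2 * π)} = I₁ ∪ I₂ ∪ I₃ := by
  have hπ : 0 < π := Real.pi_pos
  set S : Set ℝ := {θ | (∀ x ∈ D, x ∉ Icc θ (θ + π / 2)) ∧ θ ∈ Ico b (b + 2 * π)} with hSdef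
  set f : ℝ → ℝ := fun θ => sSup (D ∩ Icc b θ) with hfdef
  have hfmem : ∀ θ ∈ S, f θ ∈ D ∧ b ≤ f θ ∧ f θ ≤ θ := by
    intro θ hθ
    have hne : (D ∩ Icc b θ).Nonempty := ⟨b, hb, le_refl b, hθ.2.1⟩
    have h := hne.csSup_mem (hDfin b θ)
    exact ⟨h.1, h.2.1, h.2.2⟩
  have hfle : ∀ θ : ℝ, b ≤ θ → ∀ x ∈ D, b ≤ x → x ≤ θ → x ≤ f θ := by
    intro θ hbθ x hx h1 h2
    exact le_csSup (hDfin b θ).bddAbove ⟨hx, h1, h2⟩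
  have hgap : ∀ θ ∈ S, ∀ x ∈ D, f θ < x → θ + π / 2 < x := by
    intro θ hθ x hx hlt
    by_contra hcon
    push_neg at hcon
    rcases le_or_gt x θ with h | h
    · rcases le_or_gt b x with h' | h'
      · exact absurd (hfle θ hθ.2.1 x hx h' h) (not_le.mpr hlt)
      · have := (hfmem θ hθ).2.1; linarith
    · exact hθ.1 x hx ⟨h.le, hcon⟩
  have hVsub : f '' S ⊆ D ∩ Icc b (b + 2 * π) := by
    rintro _ ⟨θ, hθ, rfl⟩
    obtain ⟨h1, h2, h3⟩ := hfmem θ hθ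
    exact ⟨h1, h2, h3.trans hθ.2.2.le⟩
  have hVfin : (f '' S).Finite := (hDfin b (b + 2 * π)).subset hVsub
  have hVcard : hVfin.toFinset.card ≤ 3 := by
    by_contra hcard
    push_neg at hcard
    obtain ⟨s, hs, hs4⟩ := Finset.exists_subset_card_eq (Nat.succ_le_of_lt hcard)
    have e := s.orderIsoOfFin hs4
    have hd : ∀ i : Fin 4, ∃ θ ∈ S, f θ = (e i : ℝ) := by
      intro i
      have : (e i : ℝ) ∈ f '' S := hVfin.mem_toFinset.mp (hs (e i).2)
      obtain ⟨θ, hθ, hfθ⟩ := this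
      exact ⟨θ, hθ, hfθ⟩
    obtain ⟨θ₀, hθ₀, hf₀⟩ := hd 0
    obtain ⟨θ₁, hθ₁, hf₁⟩ := hd 1
    obtain ⟨θ₂, hθ₂, hf₂⟩ := hd 2
    obtain ⟨θ₃, hθ₃, hf₃⟩ := hd 3
    have hm : ∀ i j : Fin 4, i < j → ((e i : ℝ) < (e j : ℝ)) := by
      intro i j hij
      exact_mod_cast e.strictMono hij
    have hD : ∀ i : Fin 4, ((e i : ℝ)) ∈ D := fun i => (hVsub (hVfin.mem_toFinset.mp (hs (e i).2))).1
    have h01 : (e 0 : ℝ) + π / 2 < (e 1 : ℝ) := by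
      have := hgap θ₀ hθ₀ _ (hD 1) (hf₀ ▸ hm 0 1 (by decide))
      have h0 := (hfmem θ₀ hθ₀).2.2
      rw [hf₀] at h0; linarith
    have h12 : (e 1 : ℝ) + π / 2 < (e 2 : ℝ) := by
      have := hgap θ₁ hθ₁ _ (hD 2) (hf₁ ▸ hm 1 2 (by decide))
      have h0 := (hfmem θ₁ hθ₁).2.2
      rw [hf₁] at h0; linarith
    have h23 : (e 2 : ℝ) + π / 2 < (e 3 : ℝ) := by
      have := hgap θ₂ hθ₂ _ (hD 3) (hf₂ ▸ hm 2 3 (by decide))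
      have h0 := (hfmem θ₂ hθ₂).2.2
      rw [hf₂] at h0; linarith
    have h3T : (e 3 : ℝ) + π / 2 < b + 2 * π := by
      have hbD : b + 2 * π ∈ D := hDper b hb
      have hlt : f θ₃ < b + 2 * π := lt_of_le_of_lt (hfmem θ₃ hθ₃).2.2 hθ₃.2.2
      have := hgap θ₃ hθ₃ _ hbD hlt
      have h0 := (hfmem θ₃ hθ₃).2.2
      rw [hf₃] at h0; linarith
    have hb0 : b ≤ (e 0 : ℝ) := (hVsub (hVfin.mem_toFinset.mp (hs (e 0).2))).2.1
    linarith
  have hcover : ∃ x y z : ℝ, ∀ a ∈ f '' S, a = x ∨ a = y ∨ a = z := by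
    have hl : hVfin.toFinset.toList.length ≤ 3 := by
      rw [Finset.length_toList]; exact hVcard
    have hmem : ∀ a ∈ f '' S, a ∈ hVfin.toFinset.toList := by
      intro a ha; rw [Finset.mem_toList, Set.Finite.mem_toFinset]; exact ha
    obtain ⟨L, hlen, hmemL⟩ : ∃ L : List ℝ, L.length ≤ 3 ∧ ∀ a ∈ f '' S, a ∈ L :=
      ⟨_, hl, hmem⟩
    match L, hlen, hmemL with
    | [], _, h => exact ⟨0, 0, 0, fun a ha => absurd (h a ha) (by simp)⟩
    | [x], _, h => exact ⟨x, x, x, fun a ha => by simpa using h a ha⟩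
    | [x, y], _, h => exact ⟨x, y, y, fun a ha => by simpa [or_assoc] using h a ha⟩
    | [x, y, z], _, h => exact ⟨x, y, z, fun a ha => by simpa using h a ha⟩
  obtain ⟨x, y, z, hxyz⟩ := hcover
  have hIord : ∀ d : ℝ, ({θ ∈ S | f θ = d} : Set ℝ).OrdConnected := by
    intro d
    constructor
    rintro θ ⟨hθS, hθf⟩ θ' ⟨hθ'S, hθ'f⟩ t ⟨ht1, ht2⟩
    have hbt : t ∈ Ico b (b + 2 * π) := ⟨hθS.2.1.trans ht1, lt_of_le_of_lt ht2 hθ'S.2.2⟩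
    have hmono1 : f θ ≤ f t := csSup_le_csSup (hDfin b t).bddAbove
      ⟨b, hb, le_refl b, hθS.2.1⟩ (fun u hu => ⟨hu.1, hu.2.1, hu.2.2.trans ht1⟩)
    have hmono2 : f t ≤ f θ' := csSup_le_csSup (hDfin b θ').bddAbove
      ⟨b, hb, le_refl b, hbt.1⟩ (fun u hu => ⟨hu.1, hu.2.1, hu.2.2.trans ht2⟩)
    have hft : f t = d := le_antisymm (hθ'f ▸ hmono2) (hθf ▸ hmono1)
    refine ⟨⟨?_, hbt⟩, hft⟩
    intro u hu ⟨hu1, hu2⟩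
    rcases le_or_gt u θ' with h | h
    · have hub : b ≤ u := hθS.2.1.trans (ht1.trans hu1)
      have : u ≤ f θ' := hfle θ' hθ'S.2.1 u hu hub h
      rw [hθ'f, ← hθf] at this
      have hfθθ : f θ ≤ θ := (hfmem θ hθS).2.2
      exact hθS.1 u hu ⟨ht1.trans hu1, by linarith⟩
    · exact hθ'S.1 u hu ⟨h.le, by linarith⟩
  refine ⟨{θ ∈ S | f θ = x}, {θ ∈ S | f θ = y}, {θ ∈ S | f θ = z},
    hIord x, hIord y, hIord z, ?_⟩
  ext θ
  constructor
  · intro hθ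
    rcases hxyz (f θ) ⟨θ, hθ, rfl⟩ with h | h | h
    · exact Or.inl (Or.inl ⟨hθ, h⟩)
    · exact Or.inl (Or.inr ⟨hθ, h⟩)
    · exact Or.inr ⟨hθ, h⟩
  · rintro ((⟨h, _⟩ | ⟨h, _⟩) | ⟨h, _⟩) <;> exact h

/-- for a finite nonempty `Q ⊆ ℝ² \ {p}`, the set of directions
`θ mod 2π` for which the wedge `W_θ(p)` is `Q`-free is a union of at most three arcs. -/
theorem free_wedge_angles_union_three_arcs (p : ℝ × ℝ) (Q : Set (ℝ × ℝ))
    (hQfin : Q.Finite) (hQne : Q.Nonempty) (hp : p ∉ Q) :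
    ∃ A₁ A₂ A₃ : Set Real.Angle, IsArc A₁ ∧ IsArc A₂ ∧ IsArc A₃ ∧
      (fun θ : ℝ => (θ : Real.Angle)) '' {θ : ℝ | wedge p θ ∩ Q = ∅} = A₁ ∪ A₂ ∪ A₃ := by
  obtain ⟨q₀, hq₀⟩ := hQne
  have hπ : 0 < π := Real.pi_pos
  set D : Set ℝ := {x | ∃ q ∈ Q, ∃ k : ℤ, x = dang p q + 2 * π * k} with hDdef
  set b : ℝ := dang p q₀ with hbdef
  have hb : b ∈ D := ⟨q₀, hq₀, 0, by simp [hbdef]⟩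
  have hDfin : ∀ a c : ℝ, (D ∩ Set.Icc a c).Finite := by
    intro a c
    apply Set.Finite.subset (Set.Finite.biUnion hQfin (fun q _ =>
      (Set.finite_Icc (⌈(a - dang p q) / (2 * π)⌉) (⌊(c - dang p q) / (2 * π)⌋)).image
        (fun k : ℤ => dang p q + 2 * π * k)))
    rintro u ⟨⟨q, hq, k, rfl⟩, hx1, hx2⟩
    refine Set.mem_biUnion hq ⟨k, ⟨?_, ?_⟩, rfl⟩
    · rw [Int.ceil_le, div_le_iff₀ (by positivity)]; linarith
    · rw [Int.le_floor, le_div_iff₀ (by positivity)]; linarith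
  have hDshift : ∀ x ∈ D, ∀ k : ℤ, x + 2 * π * k ∈ D := by
    rintro u ⟨q, hq, k0, rfl⟩ k
    exact ⟨q, hq, k0 + k, by push_cast; ring⟩
  have hDper : ∀ x ∈ D, x + 2 * π ∈ D := by
    intro u hu
    have := hDshift u hu 1
    simpa using this
  have hFree : ∀ θ : ℝ, wedge p θ ∩ Q = ∅ ↔ ∀ x ∈ D, x ∉ Set.Icc θ (θ + π / 2) := by
    intro θ
    constructor
    · rintro h u ⟨q, hq, k, rfl⟩ hmem
      have hqp : q ≠ p := fun h' => hp (h' ▸ hq)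
      have hwq : q ∈ wedge p θ := (mem_wedge_iff p q hqp θ).mpr ⟨k, hmem⟩
      have : q ∈ wedge p θ ∩ Q := ⟨hwq, hq⟩
      rw [h] at this
      exact this
    · intro h
      rw [Set.eq_empty_iff_forall_notMem]
      rintro q ⟨hqw, hqQ⟩
      have hqp : q ≠ p := fun h' => hp (h' ▸ hqQ)
      obtain ⟨k, hk⟩ := (mem_wedge_iff p q hqp θ).mp hqw
      exact h _ ⟨q, hqQ, k, rfl⟩ hk
  obtain ⟨I₁, I₂, I₃, h₁, h₂, h₃, hS⟩ := aux_three_intervals D b hb hDfin hDper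
  refine ⟨(fun x : ℝ => (x : Real.Angle)) '' I₁, (fun x : ℝ => (x : Real.Angle)) '' I₂,
    (fun x : ℝ => (x : Real.Angle)) '' I₃, ⟨I₁, h₁, rfl⟩, ⟨I₂, h₂, rfl⟩, ⟨I₃, h₃, rfl⟩, ?_⟩
  rw [← Set.image_union, ← Set.image_union, ← hS]
  apply Set.Subset.antisymm
  · rintro _ ⟨θ, hθ, rfl⟩
    have hθF : ∀ x ∈ D, x ∉ Set.Icc θ (θ + π / 2) := (hFree θ).mp hθ
    set θ' : ℝ := toIcoMod Real.two_pi_pos b θ with hθ'def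
    have hmem : θ' ∈ Set.Ico b (b + 2 * π) := toIcoMod_mem_Ico Real.two_pi_pos b θ
    have hsub : θ - θ' = (toIcoDiv Real.two_pi_pos b θ : ℝ) * (2 * π) := by
      have := self_sub_toIcoMod Real.two_pi_pos b θ
      rw [this]; push_cast [zsmul_eq_mul]; ring
    set k : ℤ := toIcoDiv Real.two_pi_pos b θ
    have hθ'F : ∀ x ∈ D, x ∉ Set.Icc θ' (θ' + π / 2) := by
      intro u hu ⟨hu1, hu2⟩
      have hu' : u + 2 * π * k ∈ D := hDshift u hu k
      exact hθF _ hu' ⟨by linarith, by linarith⟩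
    have hang : (θ : Real.Angle) = (θ' : Real.Angle) :=
      Real.Angle.angle_eq_iff_two_pi_dvd_sub.mpr ⟨k, by linarith⟩
    exact ⟨θ', ⟨hθ'F, hmem⟩, hang.symm⟩
  · rintro _ ⟨θ, hθ, rfl⟩
    exact ⟨θ, (hFree θ).mpr hθ.1, rfl⟩
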